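/- Pruning soundness for aggregated objectives: let F_ext be monotone in its first argument and F_agg : R^m → R^k monotone. If partial paths π, π' to the same vertex satisfy c_{F_ext}(π) ⪯ c_{F_ext}(π') componentwise, then for any common suffix σ, F_agg(c_{F_ext}(π·σ)) ⪯ F_agg(c_{F_ext}(π'·σ)) componentwise; hence any solution extending π' is dominated (in the solution objectives) by the corresponding solution extending π. -/
import Mathlib


/-- Generalized path cost: fold the extension function over the list of edge costs. -/
def pathCost {m d : ℕ} (Fext : (Fin m → ℝ) → (Fin d → ℝ) → (Fin m → ℝ))
    (init : Fin m → ℝ) (edges : List (Fin d → ℝ)) : Fin m → ℝ :=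
  edges.foldl Fext init

theorem pruning_soundness {m d k : ℕ}
    (Fext : (Fin m → ℝ) → (Fin d → ℝ) → (Fin m → ℝ))
    (Fagg : (Fin m → ℝ) → (Fin k → ℝ))
    (hext : ∀ (c : Fin d → ℝ) (x y : Fin m → ℝ),
      (∀ i, x i ≤ y i) → ∀ i, Fext x c i ≤ Fext y c i)
    (hagg : ∀ x y : Fin m → ℝ, (∀ i, x i ≤ y i) → ∀ i, Fagg x i ≤ Fagg y i)
    (cπ cπ' : Fin m → ℝ) (hdom : ∀ i, cπ i ≤ cπ' i) :
    ∀ σ : List (Fin d → ℝ),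
      ∀ i, Fagg (pathCost Fext cπ σ) i ≤ Fagg (pathCost Fext cπ' σ) i := by
  intro σ
  apply hagg
  induction σ generalizing cπ cπ' with
  | nil => exact hdom
  | cons e t ih => exact ih _ _ (hext e _ _ hdom)
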